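/- Let ε ∈ ℂ be a primitive cube root of unity, let α, β, γ ∈ ℂ, and define G(X,Y,U,V) = X² − U² − (Y − V + α)(Y − εV + β)(Y − ε²V + γ) ∈ ℂ[X,Y,U,V]. Then the set of points of ℂ⁴ at which G and all four of its partial derivatives vanish is exactly {p₁, p₂, p₃}, where p₁ = (0, (εβ − γ)/(1 − ε), 0, (β − γ)/(ε(1 − ε))), p₂ = (0, (ε²α − γ)/(1 − ε²), 0, (α − γ)/(1 − ε²)), p₃ = (0, (εα − β)/(1 − ε), 0, (α − β)/(1 − ε)) (coordinates (X, Y, U, V)). -/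
import Mathlib


open MvPolynomial

/-- The deformation `G = X² − U² − (Y − V + α)(Y − εV + β)(Y − ε²V + γ)` of the threefold
cusp respecting the factorization `(X−U)(X+U) = (Y−V)(Y−εV)(Y−ε²V)`, with variables
`X = X 0`, `Y = X 1`, `U = X 2`, `V = X 3`. -/
noncomputable def G (ε α β γ : ℂ) : MvPolynomial (Fin 4) ℂ :=
  X 0 ^ 2 - X 2 ^ 2 -
    (X 1 - X 3 + C α) * (X 1 - C ε * X 3 + C β) * (X 1 - C (ε ^ 2) * X 3 + C γ)

lemma eG (ε α β γ : ℂ) (p : Fin 4 → ℂ) :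
    eval p (G ε α β γ) = p 0 ^ 2 - p 2 ^ 2 -
      (p 1 - p 3 + α) * (p 1 - ε * p 3 + β) * (p 1 - ε ^ 2 * p 3 + γ) := by
  simp [G]

lemma e0 (ε α β γ : ℂ) (p : Fin 4 → ℂ) :
    eval p (pderiv 0 (G ε α β γ)) = 2 * p 0 := by
  simp only [G, map_sub, map_add, map_mul, pderiv_mul, pderiv_pow, pderiv_X, pderiv_C,
    Pi.single_apply, eval_add, eval_sub, eval_mul, eval_X, eval_C, eval_pow]
  simp
  try ring

lemma e2 (ε α β γ : ℂ) (p : Fin 4 → ℂ) :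
    eval p (pderiv 2 (G ε α β γ)) = -(2 * p 2) := by
  simp only [G, map_sub, map_add, map_mul, pderiv_mul, pderiv_pow, pderiv_X, pderiv_C,
    Pi.single_apply, eval_add, eval_sub, eval_mul, eval_X, eval_C, eval_pow]
  simp
  try ring

lemma e1 (ε α β γ : ℂ) (p : Fin 4 → ℂ) :
    eval p (pderiv 1 (G ε α β γ)) =
      -((p 1 - ε * p 3 + β) * (p 1 - ε ^ 2 * p 3 + γ)
        + (p 1 - p 3 + α) * (p 1 - ε ^ 2 * p 3 + γ)
        + (p 1 - p 3 + α) * (p 1 - ε * p 3 + β)) := by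
  simp only [G, map_sub, map_add, map_mul, pderiv_mul, pderiv_pow, pderiv_X, pderiv_C,
    Pi.single_apply, eval_add, eval_sub, eval_mul, eval_X, eval_C, eval_pow]
  simp
  try ring

lemma e3 (ε α β γ : ℂ) (p : Fin 4 → ℂ) :
    eval p (pderiv 3 (G ε α β γ)) =
      (p 1 - ε * p 3 + β) * (p 1 - ε ^ 2 * p 3 + γ)
        + ε * ((p 1 - p 3 + α) * (p 1 - ε ^ 2 * p 3 + γ))
        + ε ^ 2 * ((p 1 - p 3 + α) * (p 1 - ε * p 3 + β)) := by
  simp only [G, map_sub, map_add, map_mul, pderiv_mul, pderiv_pow, pderiv_X, pderiv_C,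
    Pi.single_apply, eval_add, eval_sub, eval_mul, eval_X, eval_C, eval_pow]
  simp
  try ring

lemma sing_iff (ε α β γ : ℂ) (p : Fin 4 → ℂ) :
    (eval p (G ε α β γ) = 0 ∧ ∀ i : Fin 4, eval p (pderiv i (G ε α β γ)) = 0) ↔
    (p 0 = 0 ∧ p 2 = 0 ∧
      (p 1 - p 3 + α) * (p 1 - ε * p 3 + β) * (p 1 - ε ^ 2 * p 3 + γ) = 0 ∧
      (p 1 - ε * p 3 + β) * (p 1 - ε ^ 2 * p 3 + γ)
        + (p 1 - p 3 + α) * (p 1 - ε ^ 2 * p 3 + γ)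
        + (p 1 - p 3 + α) * (p 1 - ε * p 3 + β) = 0 ∧
      (p 1 - ε * p 3 + β) * (p 1 - ε ^ 2 * p 3 + γ)
        + ε * ((p 1 - p 3 + α) * (p 1 - ε ^ 2 * p 3 + γ))
        + ε ^ 2 * ((p 1 - p 3 + α) * (p 1 - ε * p 3 + β)) = 0) := by
  constructor
  · rintro ⟨hg, hd⟩
    have h0 := hd 0; rw [e0] at h0
    have h2 := hd 2; rw [e2] at h2
    have h1 := hd 1; rw [e1] at h1
    have h3 := hd 3; rw [e3] at h3
    have hp0 : p 0 = 0 := by linear_combination h0 / 2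
    have hp2 : p 2 = 0 := by linear_combination -h2 / 2
    rw [eG, hp0, hp2] at hg
    refine ⟨hp0, hp2, by linear_combination -hg, by linear_combination -h1, h3⟩
  · rintro ⟨hp0, hp2, hg, h1, h3⟩
    refine ⟨by rw [eG, hp0, hp2]; linear_combination -hg, fun i => ?_⟩
    fin_cases i
    · show eval p (pderiv 0 (G ε α β γ)) = 0
      rw [e0, hp0]; ring
    · show eval p (pderiv 1 (G ε α β γ)) = 0
      rw [e1]; linear_combination -h1
    · show eval p (pderiv 2 (G ε α β γ)) = 0
      rw [e2, hp2]; ring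
    · show eval p (pderiv 3 (G ε α β γ)) = 0
      rw [e3]; exact h3

lemma eqvec (p : Fin 4 → ℂ) (y v : ℂ) (h0 : p 0 = 0) (h1 : p 1 = y)
    (h2 : p 2 = 0) (h3 : p 3 = v) : p = ![0, y, 0, v] := by
  funext i; fin_cases i <;> simp [h0, h1, h2, h3]

lemma ab_case (ε α β γ y v : ℂ) (ha : y - v + α = 0) (hb : y - ε * v + β = 0) :
    (y - v + α) * (y - ε * v + β) * (y - ε ^ 2 * v + γ) = 0 ∧
    (y - ε * v + β) * (y - ε ^ 2 * v + γ) + (y - v + α) * (y - ε ^ 2 * v + γ)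
      + (y - v + α) * (y - ε * v + β) = 0 ∧
    (y - ε * v + β) * (y - ε ^ 2 * v + γ) + ε * ((y - v + α) * (y - ε ^ 2 * v + γ))
      + ε ^ 2 * ((y - v + α) * (y - ε * v + β)) = 0 := by
  refine ⟨?_, ?_, ?_⟩ <;> rw [ha, hb] <;> ring

lemma ac_case (ε α β γ y v : ℂ) (ha : y - v + α = 0) (hc : y - ε ^ 2 * v + γ = 0) :
    (y - v + α) * (y - ε * v + β) * (y - ε ^ 2 * v + γ) = 0 ∧
    (y - ε * v + β) * (y - ε ^ 2 * v + γ) + (y - v + α) * (y - ε ^ 2 * v + γ)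
      + (y - v + α) * (y - ε * v + β) = 0 ∧
    (y - ε * v + β) * (y - ε ^ 2 * v + γ) + ε * ((y - v + α) * (y - ε ^ 2 * v + γ))
      + ε ^ 2 * ((y - v + α) * (y - ε * v + β)) = 0 := by
  refine ⟨?_, ?_, ?_⟩ <;> rw [ha, hc] <;> ring

lemma bc_case (ε α β γ y v : ℂ) (hb : y - ε * v + β = 0) (hc : y - ε ^ 2 * v + γ = 0) :
    (y - v + α) * (y - ε * v + β) * (y - ε ^ 2 * v + γ) = 0 ∧
    (y - ε * v + β) * (y - ε ^ 2 * v + γ) + (y - v + α) * (y - ε ^ 2 * v + γ)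
      + (y - v + α) * (y - ε * v + β) = 0 ∧
    (y - ε * v + β) * (y - ε ^ 2 * v + γ) + ε * ((y - v + α) * (y - ε ^ 2 * v + γ))
      + ε ^ 2 * ((y - v + α) * (y - ε * v + β)) = 0 := by
  refine ⟨?_, ?_, ?_⟩ <;> rw [hb, hc] <;> ring

/-- The set of singular points of `G` (points where `G` and all four of its partial
derivatives vanish) is exactly `{p₁, p₂, p₃}` with
`p₁ = (0, (εβ−γ)/(1−ε), 0, (β−γ)/(ε(1−ε)))`, `p₂ = (0, (ε²α−γ)/(1−ε²), 0, (α−γ)/(1−ε²))`,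
`p₃ = (0, (εα−β)/(1−ε), 0, (α−β)/(1−ε))` (coordinates `(X, Y, U, V)`). -/
theorem stmt_16 (ε : ℂ) (hε : ε ≠ 1) (hε3 : ε ^ 3 = 1) (α β γ : ℂ) :
    {p : Fin 4 → ℂ |
        eval p (G ε α β γ) = 0 ∧ ∀ i : Fin 4, eval p (pderiv i (G ε α β γ)) = 0} =
      {![0, (ε * β - γ) / (1 - ε), 0, (β - γ) / (ε * (1 - ε))],
       ![0, (ε ^ 2 * α - γ) / (1 - ε ^ 2), 0, (α - γ) / (1 - ε ^ 2)],
       ![0, (ε * α - β) / (1 - ε), 0, (α - β) / (1 - ε)]} := by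
  have hε1 : (1 : ℂ) - ε ≠ 0 := sub_ne_zero.mpr (Ne.symm hε)
  have hε0 : ε ≠ 0 := by rintro rfl; norm_num at hε3
  have hεsq : (1 : ℂ) - ε ^ 2 ≠ 0 := by
    intro h
    have h21 : ε ^ 2 = 1 := by linear_combination -h
    have : ε * ε ^ 2 = 1 := by linear_combination hε3
    rw [h21, mul_one] at this
    exact hε this
  have hden : ε * (1 - ε) ≠ 0 := mul_ne_zero hε0 hε1
  ext p
  simp only [Set.mem_setOf_eq, Set.mem_insert_iff, Set.mem_singleton_iff, sing_iff]
  constructor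
  · rintro ⟨hp0, hp2, hg, h1, h3⟩
    rcases mul_eq_zero.mp hg with hab | hc
    · rcases mul_eq_zero.mp hab with ha | hb
      · have hbc : (p 1 - ε * p 3 + β) * (p 1 - ε ^ 2 * p 3 + γ) = 0 := by
          linear_combination h1 - (p 1 - ε ^ 2 * p 3 + γ) * ha - (p 1 - ε * p 3 + β) * ha
        rcases mul_eq_zero.mp hbc with hb | hc2
        · right; right
          exact eqvec p _ _ hp0
            (by rw [eq_div_iff hε1]; linear_combination hb - ε * ha) hp2
            (by rw [eq_div_iff hε1]; linear_combination hb - ha)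
        · right; left
          exact eqvec p _ _ hp0
            (by rw [eq_div_iff hεsq]; linear_combination hc2 - ε ^ 2 * ha) hp2
            (by rw [eq_div_iff hεsq]; linear_combination hc2 - ha)
      · have hac : (p 1 - p 3 + α) * (p 1 - ε ^ 2 * p 3 + γ) = 0 := by
          linear_combination h1 - (p 1 - ε ^ 2 * p 3 + γ) * hb - (p 1 - p 3 + α) * hb
        rcases mul_eq_zero.mp hac with ha | hc2
        · right; right
          exact eqvec p _ _ hp0
            (by rw [eq_div_iff hε1]; linear_combination hb - ε * ha) hp2
            (by rw [eq_div_iff hε1]; linear_combination hb - ha)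
        · left
          exact eqvec p _ _ hp0
            (by rw [eq_div_iff hε1]; linear_combination hc2 - ε * hb) hp2
            (by rw [eq_div_iff hden]; linear_combination hc2 - hb)
    · have hab2 : (p 1 - p 3 + α) * (p 1 - ε * p 3 + β) = 0 := by
        linear_combination h1 - (p 1 - ε * p 3 + β) * hc - (p 1 - p 3 + α) * hc
      rcases mul_eq_zero.mp hab2 with ha | hb
      · right; left
        exact eqvec p _ _ hp0
          (by rw [eq_div_iff hεsq]; linear_combination hc - ε ^ 2 * ha) hp2
          (by rw [eq_div_iff hεsq]; linear_combination hc - ha)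
      · left
        exact eqvec p _ _ hp0
          (by rw [eq_div_iff hε1]; linear_combination hc - ε * hb) hp2
          (by rw [eq_div_iff hden]; linear_combination hc - hb)
  · rintro (rfl | rfl | rfl) <;>
      simp only [Matrix.cons_val_zero, Matrix.cons_val_one, Matrix.head_cons,
        Matrix.cons_val_two, Matrix.tail_cons, Matrix.cons_val_three]
    · exact ⟨trivial, trivial, bc_case ε α β γ _ _ (by field_simp; ring) (by field_simp; ring)⟩
    · exact ⟨trivial, trivial, ac_case ε α β γ _ _ (by field_simp; ring) (by field_simp; ring)⟩
    · exact ⟨trivial, trivial, ab_case ε α β γ _ _ (by field_simp; ring) (by field_simp; ring)⟩
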